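/- Let N, R be ℓ×ℓ real matrices and set G = N Nᵀ + R − Rᵀ. Define the matrix-valued kernel K(t, s) = exp(−((t − s)/2) G) when t ≥ s, and K(t, s) = exp(−((s − t)/2) Gᵀ) when t < s. Then K is nonnegative definite: for every m, all times t₁, …, t_m ∈ ℝ, and all vectors v₁, …, v_m ∈ ℝ^ℓ, one has ∑_{i,j} v_iᵀ K(t_i, t_j) v_j ≥ 0. (Equivalently, the PEG covariance kernel C_PEG(τ; N, R) = exp(−(|τ|/2) G) for τ ≥ 0, transposed for τ < 0, is the covariance kernel of a stationary Gaussian process.) -/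

import Mathlib

/-!
Because the symmetric part of `G = N Nᵀ + R - Rᵀ` is `N Nᵀ ⪰ 0`, the derivative of
`τ ↦ |exp (-(τ/2) G) x|²` is `≤ 0`, so `S τ = exp (-(τ/2) G)` is a contraction semigroup, and the
kernel is `K(t, s) = S (t - s)` for `t ≥ s`, `S (s - t)ᵀ` otherwise. For such a kernel, the vector
`x` sitting at the earliest time `a` can be moved to the next time `b` as `S (b - a) x`: the
semigroup law shows that this changes the quadratic form by `|x|² - |S (b - a) x|² ≥ 0` and
removes one time point, so induction on the number of time points gives nonnegativity.
-/

open Matrix NormedSpace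

variable {n : Type*}

theorem HasDerivAt.dotProduct_self [Fintype n] {f : ℝ → n → ℝ} {f' : n → ℝ} {c : ℝ}
    (hf : HasDerivAt f f' c) : HasDerivAt (fun c => f c ⬝ᵥ f c) (2 * (f c ⬝ᵥ f')) c := by
  have hcomp : ∀ i, HasDerivAt (fun c => f c i * f c i) (f' i * f c i + f c i * f' i) c :=
    fun i => (hasDerivAt_pi.1 hf i).mul (hasDerivAt_pi.1 hf i)
  refine (HasDerivAt.fun_sum (u := Finset.univ) fun i _ => hcomp i).congr_deriv ?_
  simp only [dotProduct, Finset.mul_sum]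
  exact Finset.sum_congr rfl fun i _ => by ring

namespace Matrix

section KernelQuadSum

variable [Fintype n] {ι α : Type*} (K : α → α → Matrix n n ℝ) (t : ι → α)

def kernelQuadSum (s : Finset ι) (v : ι → n → ℝ) : ℝ :=
  ∑ i ∈ s, ∑ j ∈ s, v i ⬝ᵥ K (t i) (t j) *ᵥ v j

variable {K}

theorem kernelQuadSum_insert [DecidableEq ι] (hK : ∀ a b, K b a = (K a b)ᵀ) {s : Finset ι}
    {i : ι} (hi : i ∉ s) (v : ι → n → ℝ) :
    kernelQuadSum K t (insert i s) v = v i ⬝ᵥ K (t i) (t i) *ᵥ v i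
      + 2 * ∑ j ∈ s, v j ⬝ᵥ K (t j) (t i) *ᵥ v i + kernelQuadSum K t s v := by
  have hsymm : ∀ j, v i ⬝ᵥ K (t i) (t j) *ᵥ v j = v j ⬝ᵥ K (t j) (t i) *ᵥ v i := fun j => by
    rw [hK, dotProduct_transpose_mulVec]
  simp only [kernelQuadSum, Finset.sum_insert hi, Finset.sum_add_distrib, hsymm]
  ring

end KernelQuadSum

section SemigroupKernel

variable {S : ℝ → Matrix n n ℝ}

variable (S) in
noncomputable def semigroupKernel (a b : ℝ) : Matrix n n ℝ :=
  if b ≤ a then S (a - b) else (S (b - a))ᵀ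

theorem semigroupKernel_of_le {a b : ℝ} (h : b ≤ a) : semigroupKernel S a b = S (a - b) :=
  if_pos h

variable [Fintype n] [DecidableEq n]

structure IsContractionSemigroup (S : ℝ → Matrix n n ℝ) : Prop where
  map_zero : S 0 = 1
  map_add : ∀ a b, 0 ≤ a → 0 ≤ b → S (a + b) = S a * S b
  mulVec_dotProduct_mulVec_le : ∀ τ, 0 ≤ τ → ∀ x : n → ℝ, S τ *ᵥ x ⬝ᵥ S τ *ᵥ x ≤ x ⬝ᵥ x

namespace IsContractionSemigroup

variable (hS : IsContractionSemigroup S)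
include hS

theorem semigroupKernel_self (a : ℝ) : semigroupKernel S a a = 1 := by
  rw [semigroupKernel_of_le le_rfl, sub_self, hS.map_zero]

theorem semigroupKernel_swap (a b : ℝ) : semigroupKernel S b a = (semigroupKernel S a b)ᵀ := by
  rcases lt_trichotomy a b with hab | rfl | hab
  · simp [semigroupKernel, hab.le, hab.not_ge]
  · rw [hS.semigroupKernel_self, transpose_one]
  · simp [semigroupKernel, hab.le, hab.not_ge]

theorem semigroupKernel_trans {a b c : ℝ} (hab : a ≤ b) (hbc : b ≤ c) :
    semigroupKernel S c a = semigroupKernel S c b * semigroupKernel S b a := by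
  rw [semigroupKernel_of_le (hab.trans hbc), semigroupKernel_of_le hbc, semigroupKernel_of_le hab,
    ← hS.map_add _ _ (sub_nonneg.2 hbc) (sub_nonneg.2 hab), sub_add_sub_cancel]

/-- The left side is the quadratic form of the kernel on `s` extended by a point `(a, x)` earlier
than all of `s`; this is the statement that survives the induction. -/
theorem kernelQuadSum_with_earlier_point_nonneg {ι : Type*} (t : ι → ℝ) (s : Finset ι) :
    ∀ a : ℝ, (∀ j ∈ s, a ≤ t j) → ∀ (x : n → ℝ) (v : ι → n → ℝ),
      0 ≤ x ⬝ᵥ x + 2 * ∑ j ∈ s, v j ⬝ᵥ semigroupKernel S (t j) a *ᵥ x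
        + kernelQuadSum (semigroupKernel S) t s v := by
  classical
  induction s using Finset.strongInduction with
  | H s ih =>
  intro a ha x v
  rcases s.eq_empty_or_nonempty with rfl | hne
  · have hx : 0 ≤ x ⬝ᵥ x := Finset.sum_nonneg fun k _ => mul_self_nonneg (x k)
    simpa [kernelQuadSum] using hx
  obtain ⟨i, hi, hmin⟩ := s.exists_min_image t hne
  obtain ⟨s, his, rfl⟩ : ∃ s', i ∉ s' ∧ insert i s' = s :=
    ⟨s.erase i, Finset.notMem_erase i _, Finset.insert_erase hi⟩
  set E := S (t i - a)
  have hE : ∀ j ∈ insert i s, semigroupKernel S (t j) a = semigroupKernel S (t j) (t i) * E :=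
    fun j hj => by
      rw [hS.semigroupKernel_trans (ha i hi) (hmin j hj), semigroupKernel_of_le (ha i hi)]
  have hmove : x ⬝ᵥ x + 2 * ∑ j ∈ insert i s, v j ⬝ᵥ semigroupKernel S (t j) a *ᵥ x
        + kernelQuadSum (semigroupKernel S) t (insert i s) v
      = (x ⬝ᵥ x - E *ᵥ x ⬝ᵥ E *ᵥ x)
        + ((v i + E *ᵥ x) ⬝ᵥ (v i + E *ᵥ x)
          + 2 * ∑ j ∈ s, v j ⬝ᵥ semigroupKernel S (t j) (t i) *ᵥ (v i + E *ᵥ x)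
          + kernelQuadSum (semigroupKernel S) t s v) := by
    rw [kernelQuadSum_insert t hS.semigroupKernel_swap his, Finset.sum_congr rfl fun j hj => by
      rw [hE j hj], Finset.sum_insert his, hS.semigroupKernel_self]
    simp only [← mulVec_mulVec, one_mulVec, mulVec_add, dotProduct_add, add_dotProduct,
      Finset.sum_add_distrib, dotProduct_comm (E *ᵥ x) (v i)]
    ring
  rw [hmove]
  have hcontract := hS.mulVec_dotProduct_mulVec_le (t i - a) (sub_nonneg.2 (ha i hi)) x
  have hrest := ih s (Finset.ssubset_insert his) (t i)
    (fun j hj => hmin j (Finset.mem_insert_of_mem hj)) (v i + E *ᵥ x) v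
  linarith

theorem kernelQuadSum_nonneg {ι : Type*} (t : ι → ℝ) (s : Finset ι) (v : ι → n → ℝ) :
    0 ≤ kernelQuadSum (semigroupKernel S) t s v := by
  obtain ⟨a, ha⟩ := (s.image t).bddBelow
  simpa using hS.kernelQuadSum_with_earlier_point_nonneg t s a
    (fun j hj => ha (Finset.mem_image_of_mem t hj)) 0 v

end IsContractionSemigroup

end SemigroupKernel

section Exponential

variable [Fintype n] [DecidableEq n]

open scoped Matrix.Norms.Operator in
theorem hasDerivAt_exp_smul_mulVec (G : Matrix n n ℝ) (x : n → ℝ) (c : ℝ) :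
    HasDerivAt (fun c : ℝ => exp (c • G) *ᵥ x) (G *ᵥ exp (c • G) *ᵥ x) c := by
  rw [mulVec_mulVec]
  exact (((mulVecBilin ℝ ℝ).flip x).toContinuousLinearMap.hasFDerivAt).comp_hasDerivAt c
    (hasDerivAt_exp_smul_const' G c)

theorem exp_smul_mulVec_dotProduct_le {G : Matrix n n ℝ} (hG : ∀ y, 0 ≤ y ⬝ᵥ G *ᵥ y) {c : ℝ}
    (hc : c ≤ 0) (x : n → ℝ) : exp (c • G) *ᵥ x ⬝ᵥ exp (c • G) *ᵥ x ≤ x ⬝ᵥ x := by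
  have hmono : Monotone fun c : ℝ => exp (c • G) *ᵥ x ⬝ᵥ exp (c • G) *ᵥ x :=
    monotone_of_hasDerivAt_nonneg (fun c => (hasDerivAt_exp_smul_mulVec G x c).dotProduct_self)
      fun c => mul_nonneg zero_le_two (hG _)
  simpa using hmono hc

theorem isContractionSemigroup_exp_smul {G : Matrix n n ℝ} (hG : ∀ y, 0 ≤ y ⬝ᵥ G *ᵥ y) :
    IsContractionSemigroup fun τ : ℝ => exp ((-(τ / 2)) • G) where
  map_zero := by simp
  map_add a b _ _ := by
    rw [← exp_add_of_commute _ _ (((Commute.refl G).smul_left _).smul_right _), ← add_smul]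
    ring_nf
  mulVec_dotProduct_mulVec_le τ hτ := exp_smul_mulVec_dotProduct_le hG (by linarith)

end Exponential

variable [Fintype n]

theorem dotProduct_mulVec_sub_transpose_self (R : Matrix n n ℝ) (y : n → ℝ) :
    y ⬝ᵥ (R - Rᵀ) *ᵥ y = 0 := by
  rw [sub_mulVec, dotProduct_sub, dotProduct_transpose_mulVec, sub_self]

theorem dotProduct_mulVec_mul_transpose_self_nonneg (N : Matrix n n ℝ) (y : n → ℝ) :
    0 ≤ y ⬝ᵥ (N * Nᵀ) *ᵥ y := by
  simpa using (posSemidef_self_mul_conjTranspose N).dotProduct_mulVec_nonneg y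

end Matrix

/-- **The PEG covariance kernel is nonnegative definite.**  With `G = N Nᵀ + R - Rᵀ` and
`K(t, s) = exp(-((t-s)/2) G)` for `t ≥ s`, `K(t, s) = exp(-((s-t)/2) Gᵀ)` for `t < s`,
one has `∑_{i,j} vᵢᵀ K(tᵢ, tⱼ) vⱼ ≥ 0` for all times `t` and vectors `v`. -/
theorem peg_kernel_nonneg_definite
    {ℓ : ℕ} (N R : Matrix (Fin ℓ) (Fin ℓ) ℝ) :
    ∀ (m : ℕ) (t : Fin m → ℝ) (v : Fin m → Fin ℓ → ℝ),
      0 ≤ ∑ i, ∑ j, v i ⬝ᵥ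
        ((if t j ≤ t i then
            NormedSpace.exp ((-((t i - t j) / 2)) • (N * Nᵀ + R - Rᵀ))
          else
            NormedSpace.exp ((-((t j - t i) / 2)) • (N * Nᵀ + R - Rᵀ)ᵀ)).mulVec (v j)) := by
  intro m t v
  set G := N * Nᵀ + R - Rᵀ
  have hG : ∀ y, 0 ≤ y ⬝ᵥ G *ᵥ y := fun y => by
    rw [show G = N * Nᵀ + (R - Rᵀ) from add_sub_assoc .., add_mulVec, dotProduct_add,
      dotProduct_mulVec_sub_transpose_self, add_zero]
    exact dotProduct_mulVec_mul_transpose_self_nonneg N y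
  have hK : ∀ a b : ℝ,
      (if b ≤ a then exp ((-((a - b) / 2)) • G) else exp ((-((b - a) / 2)) • Gᵀ))
        = semigroupKernel (fun τ => exp ((-(τ / 2)) • G)) a b := fun a b => by
    rw [← transpose_smul, exp_transpose]
    rfl
  simp only [hK]
  exact (isContractionSemigroup_exp_smul hG).kernelQuadSum_nonneg t Finset.univ v
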